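/- Let f : ℝ^n → ℝ be affine and C ⊆ ℝ^n convex with x⁰ ∈ relint(C). If f(y) ≥ 0 for all y ∈ C and f(x⁰) = 0 then f(y) = 0 for all y ∈ C. Consequently, if u* maximizes u ↦ uᵀ(b − A x⁰) over the set U* of dual optimal solutions, then for any u ∈ U*, the inequality uᵀ(b − A y) ≥ u*ᵀ(b − A y) for all y ∈ C implies uᵀ(b − A y) = u*ᵀ(b − A y) for all y ∈ C; i.e., the cut from u* is Pareto-optimal among dual optimal solutions. -/
import Mathlib

open Matrix

lemma affine_key
    (n : ℕ) (C : Set (Fin n → ℝ)) (hC : Convex ℝ C)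
    (x0 : Fin n → ℝ) (hx0 : x0 ∈ intrinsicInterior ℝ C)
    (f : (Fin n → ℝ) →ᵃ[ℝ] ℝ)
    (hfnonneg : ∀ y ∈ C, 0 ≤ f y) (hfzero : f x0 = 0) :
    ∀ y ∈ C, f y = 0 := by
  intro y hy
  obtain ⟨x, hx, hxe⟩ := mem_intrinsicInterior.1 hx0
  -- the line through y and x0 within the affine span
  have hyspan : y ∈ affineSpan ℝ C := subset_affineSpan ℝ C hy
  have hx0span : x0 ∈ affineSpan ℝ C := hxe ▸ x.2
  have hmem : ∀ t : ℝ, AffineMap.lineMap y x0 t ∈ affineSpan ℝ C := fun t =>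
    AffineMap.lineMap_mem t hyspan hx0span
  let L : ℝ → affineSpan ℝ C := fun t => ⟨AffineMap.lineMap y x0 t, hmem t⟩
  have hLcont : Continuous L := by
    apply Continuous.subtype_mk
    exact AffineMap.lineMap_continuous
  have hL1 : L 1 = x := by
    apply Subtype.ext
    simp [L, hxe]
  have hopen : IsOpen (L ⁻¹' interior ((↑) ⁻¹' C : Set (affineSpan ℝ C))) :=
    isOpen_interior.preimage hLcont
  have h1 : (1 : ℝ) ∈ L ⁻¹' interior ((↑) ⁻¹' C : Set (affineSpan ℝ C)) := by
    simp only [Set.mem_preimage, hL1]; exact hx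
  obtain ⟨ε, hε, hball⟩ := Metric.isOpen_iff.1 hopen 1 h1
  set t : ℝ := 1 + ε / 2 with ht
  have htmem : t ∈ Metric.ball (1:ℝ) ε := by
    rw [Metric.mem_ball, Real.dist_eq, ht, show (1 + ε/2 - 1) = ε/2 by ring,
      abs_of_pos (by positivity)]
    linarith
  have hzin : L t ∈ interior ((↑) ⁻¹' C : Set (affineSpan ℝ C)) := hball htmem
  have hz' : L t ∈ ((↑) ⁻¹' C : Set (affineSpan ℝ C)) := interior_subset hzin
  have hz : AffineMap.lineMap y x0 t ∈ C := hz'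
  set z : Fin n → ℝ := AffineMap.lineMap y x0 t with hzdef
  have ht1 : (1:ℝ) < t := by simp [ht]; positivity
  have ht0 : (0:ℝ) < t := by linarith
  -- x0 = lineMap y z t⁻¹
  have hx0eq : x0 = AffineMap.lineMap y z t⁻¹ := by
    simp only [hzdef, AffineMap.lineMap_apply_module]
    funext i
    simp only [Pi.add_apply, Pi.smul_apply, Pi.sub_apply, smul_eq_mul]
    field_simp
    ring
  have := hfnonneg z hz
  have hfy := hfnonneg y hy
  have hcalc : f x0 = t⁻¹ • (f z - f y) + f y := by
    rw [hx0eq, AffineMap.apply_lineMap]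
    simp [AffineMap.lineMap_apply_module]
    ring
  rw [hfzero, smul_eq_mul] at hcalc
  have hti : (0:ℝ) < t⁻¹ := by positivity
  have hti1 : t⁻¹ < 1 := by
    rw [inv_lt_one_iff₀]; right; exact ht1
  by_contra hne
  have hpos : 0 < f y := lt_of_le_of_ne hfy (Ne.symm hne)
  have h6 : t⁻¹ * f y < f y := by nlinarith
  have h7 : 0 ≤ t⁻¹ * f z := mul_nonneg hti.le this
  nlinarith

theorem magnanti_wong_pareto_optimal
    (m n : ℕ) (A : Matrix (Fin m) (Fin n) ℝ) (b : Fin m → ℝ)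
    (C : Set (Fin n → ℝ)) (hC : Convex ℝ C)
    (x0 : Fin n → ℝ) (hx0 : x0 ∈ intrinsicInterior ℝ C)
    (f : (Fin n → ℝ) →ᵃ[ℝ] ℝ)
    (hfnonneg : ∀ y ∈ C, 0 ≤ f y) (hfzero : f x0 = 0)
    (Ustar : Set (Fin m → ℝ)) (ustar : Fin m → ℝ) (hustar : ustar ∈ Ustar)
    (hmax : ∀ u ∈ Ustar, u ⬝ᵥ (b - A.mulVec x0) ≤ ustar ⬝ᵥ (b - A.mulVec x0)) :
    (∀ y ∈ C, f y = 0) ∧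
    (∀ u ∈ Ustar,
      (∀ y ∈ C, ustar ⬝ᵥ (b - A.mulVec y) ≤ u ⬝ᵥ (b - A.mulVec y)) →
      ∀ y ∈ C, u ⬝ᵥ (b - A.mulVec y) = ustar ⬝ᵥ (b - A.mulVec y)) := by
  constructor
  · exact affine_key n C hC x0 hx0 f hfnonneg hfzero
  · intro u hu hdom
    -- build the affine map g y = (u - ustar) ⬝ᵥ (b - A y)
    let g : (Fin n → ℝ) →ᵃ[ℝ] ℝ :=
      { toFun := fun y => (u - ustar) ⬝ᵥ (b - A.mulVec y)
        linear :=
          { toFun := fun v => -((u - ustar) ⬝ᵥ A.mulVec v)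
            map_add' := by intro a c; simp [Matrix.mulVec_add, dotProduct_add]; ring
            map_smul' := by intro r a; simp [Matrix.mulVec_smul]; ring }
        map_vadd' := by
          intro p v
          simp [Matrix.mulVec_add, dotProduct_sub, dotProduct_add]
          ring }
    have hg : ∀ y, g y = u ⬝ᵥ (b - A.mulVec y) - ustar ⬝ᵥ (b - A.mulVec y) := by
      intro y; simp [g, sub_dotProduct, dotProduct_sub]; ring
    have hgnonneg : ∀ y ∈ C, 0 ≤ g y := by
      intro y hy; rw [hg]; linarith [hdom y hy]
    have hx0C : x0 ∈ C := intrinsicInterior_subset hx0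
    have hgzero : g x0 = 0 := by
      rw [hg]
      have h1 := hmax u hu
      have h2 := hdom x0 hx0C
      linarith
    intro y hy
    have := affine_key n C hC x0 hx0 g hgnonneg hgzero y hy
    rw [hg] at this
    linarith
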